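/- With the assumptions of the previous proposition but requiring only p_t ∈ C¹ on B(0,d) with uniformly bounded ∇ log p_t for t < τ, the simplified VML function VML_S,t(x) = −log p_t(x) − (σ_t²/2)‖∇ log p_t(x)‖² + ‖y − H D(x,t)‖²/(2σ_y²) + log p(y) − n log σ_t + (m log σ_y − ((n−m)/2) log 2π) satisfies: VML_S,t(x) + n log σ_t → −log p₀(x|y) − (n/2) log 2π pointwise on B(0,d) as t → 0. -/

import Mathlib

/-
As `t → 0` the score stays bounded while `σ_t → 0`, so the Tweedie correction `σ_t² ∇log p_t(x)`
and the penalty `(σ_t²/2)‖∇log p_t(x)‖²` both vanish, and the denoiser `D(x,t)` tends to `x`.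
The remaining terms converge to `−log p₀(x) + ‖y − Hx‖²/(2σ_y²) + log p(y) + const`, and the
Gaussian likelihood `log N(y; Hx, σ_y²I) = −(m/2) log 2π − m log σ_y − ‖y − Hx‖²/(2σ_y²)`
turns this into `−log p₀(x|y) − (n/2) log 2π`.
-/

open MeasureTheory Real Filter Matrix

noncomputable def gpdf (k : ℕ) (σ d2 : ℝ) : ℝ :=
  (2 * Real.pi * σ ^ 2) ^ (-(k : ℝ) / 2) * Real.exp (-d2 / (2 * σ ^ 2))

/-- Density of the multivariate Gaussian `N(μ, σ²I)` on `ℝⁿ` evaluated at `x`. -/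
noncomputable def gaussPdf (n : ℕ) (σ : ℝ) (μ x : EuclideanSpace ℝ (Fin n)) : ℝ :=
  gpdf n σ (‖x - μ‖ ^ 2)

theorem log_gpdf (k : ℕ) {σ : ℝ} (hσ : σ ≠ 0) (d2 : ℝ) :
    Real.log (gpdf k σ d2)
      = -(k : ℝ) / 2 * Real.log (2 * π) - k * Real.log σ - d2 / (2 * σ ^ 2) := by
  have hpos : 0 < 2 * π * σ ^ 2 := by positivity
  rw [gpdf, Real.log_mul (rpow_pos_of_pos hpos _).ne' (exp_ne_zero _), Real.log_rpow hpos,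
    Real.log_exp, Real.log_mul (by positivity) (pow_ne_zero 2 hσ), Real.log_pow]
  push_cast
  ring

theorem continuous_sum_sq_sub_mulVec {n m : ℕ} (H : Matrix (Fin m) (Fin n) ℝ) (y : Fin m → ℝ) :
    Continuous fun v : EuclideanSpace ℝ (Fin n) => ∑ i, (y i - H.mulVec (fun k => v k) i) ^ 2 := by
  simp only [Matrix.mulVec, dotProduct]
  fun_prop

theorem simplified_vml_pointwise_limit_general (n m : ℕ) (τ d : ℝ)
    (p0 : EuclideanSpace ℝ (Fin n) → ℝ)
    (σ : ℝ → ℝ)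
    (hσ0 : Tendsto σ (nhdsWithin 0 (Set.Ioo 0 τ)) (nhds 0))
    (p : ℝ → EuclideanSpace ℝ (Fin n) → ℝ)
    (g : ℝ → EuclideanSpace ℝ (Fin n) → EuclideanSpace ℝ (Fin n))
    (hlim : ∀ x ∈ Metric.closedBall (0 : EuclideanSpace ℝ (Fin n)) d,
      Tendsto (fun t => Real.log (p t x)) (nhdsWithin 0 (Set.Ioo 0 τ))
        (nhds (Real.log (p0 x))))
    (hbdd : ∃ K, ∀ t ∈ Set.Ioo (0 : ℝ) τ,
      ∀ x ∈ Metric.closedBall (0 : EuclideanSpace ℝ (Fin n)) d, ‖g t x‖ ≤ K)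
    (H : Matrix (Fin m) (Fin n) ℝ) (y : Fin m → ℝ) (σy : ℝ) (hσy : 0 < σy)
    (py : ℝ) :
    ∀ x ∈ Metric.closedBall (0 : EuclideanSpace ℝ (Fin n)) d,
      Tendsto
        (fun t =>
          (-Real.log (p t x) - σ t ^ 2 / 2 * ‖g t x‖ ^ 2
              + (∑ i, (y i - H.mulVec (fun k => (x + σ t ^ 2 • g t x) k) i) ^ 2)
                  / (2 * σy ^ 2)
              + Real.log py - n * Real.log (σ t)
              + (m * Real.log σy - ((n : ℝ) - m) / 2 * Real.log (2 * Real.pi)))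
            + n * Real.log (σ t))
        (nhdsWithin 0 (Set.Ioo 0 τ))
        (nhds
          (-(Real.log (p0 x)
              + Real.log (gpdf m σy (∑ i, (y i - H.mulVec (fun k => x k) i) ^ 2))
              - Real.log py)
            - (n : ℝ) / 2 * Real.log (2 * Real.pi))) := by
  intro x hx
  obtain ⟨K, hK⟩ := hbdd
  have hscaled_score : Tendsto (fun t => σ t • g t x) (nhdsWithin 0 (Set.Ioo 0 τ)) (nhds 0) :=
    hσ0.zero_smul_isBoundedUnder_le <| isBoundedUnder_of_eventually_le (a := K) <|
      eventually_nhdsWithin_of_forall fun t ht => hK t ht x hx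
  have hpenalty : Tendsto (fun t => σ t ^ 2 / 2 * ‖g t x‖ ^ 2)
      (nhdsWithin 0 (Set.Ioo 0 τ)) (nhds 0) := by
    convert (hscaled_score.norm.pow 2).div_const 2 using 2 with t
    · rw [norm_smul, Real.norm_eq_abs, mul_pow, sq_abs]
      ring
    · simp
  have hdenoiser : Tendsto (fun t => x + σ t ^ 2 • g t x)
      (nhdsWithin 0 (Set.Ioo 0 τ)) (nhds x) := by
    simpa [pow_two, mul_smul] using (hσ0.smul hscaled_score).const_add x
  have hfidelity := (((continuous_sum_sq_sub_mulVec H y).tendsto x).comp hdenoiser).div_const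
    (2 * σy ^ 2)
  convert ((((hlim x hx).neg.sub hpenalty).add hfidelity).add_const
    (Real.log py + (m * Real.log σy - ((n : ℝ) - m) / 2 * Real.log (2 * π)))) using 2
  · simp only [Function.comp_apply]
    ring
  · rw [log_gpdf m hσy.ne']
    ring

/-- **Pointwise limit of the simplified VML.** Under `C¹` regularity of `p_t` on `B(0,d)`
with uniformly bounded score, `σ_t → 0`, and pointwise convergence of `log p_t` to
`log p₀`, the simplified VML function
`VML_{S,t}(x) = −log p_t(x) − (σ_t²/2)‖∇log p_t(x)‖² + ‖y − H D(x,t)‖²/(2σ_y²)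
  + log p(y) − n log σ_t + (m log σ_y − ((n−m)/2) log 2π)`
satisfies `VML_{S,t}(x) + n log σ_t → −log p₀(x|y) − (n/2) log 2π` pointwise on `B(0,d)`. -/
theorem simplified_vml_pointwise_limit (n m : ℕ) (τ d : ℝ) (hτ : 0 < τ) (hd : 0 < d)
    (p0 : EuclideanSpace ℝ (Fin n) → ℝ)
    (hp0_nonneg : ∀ x, 0 ≤ p0 x) (hp0_prob : ∫ x, p0 x = 1)
    (σ : ℝ → ℝ) (hσpos : ∀ t ∈ Set.Ioo (0 : ℝ) τ, 0 < σ t)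
    (hσ0 : Tendsto σ (nhdsWithin 0 (Set.Ioo 0 τ)) (nhds 0))
    (p : ℝ → EuclideanSpace ℝ (Fin n) → ℝ)
    (hp : ∀ t x, p t x = ∫ x₀, gaussPdf n (σ t) x₀ x * p0 x₀)
    -- `p_t ∈ C¹` on the ball; `g t x = ∇ log p_t(x)`
    (hC1 : ∀ t ∈ Set.Ioo (0 : ℝ) τ,
      ContDiffOn ℝ 1 (fun x => Real.log (p t x)) (Metric.closedBall 0 d))
    (g : ℝ → EuclideanSpace ℝ (Fin n) → EuclideanSpace ℝ (Fin n))
    (hg : ∀ t ∈ Set.Ioo (0 : ℝ) τ, ∀ x ∈ Metric.closedBall (0 : EuclideanSpace ℝ (Fin n)) d,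
      HasGradientAt (fun z => Real.log (p t z)) (g t x) x)
    (hlim : ∀ x ∈ Metric.closedBall (0 : EuclideanSpace ℝ (Fin n)) d,
      Tendsto (fun t => Real.log (p t x)) (nhdsWithin 0 (Set.Ioo 0 τ))
        (nhds (Real.log (p0 x))))
    (hbdd : ∃ K, ∀ t ∈ Set.Ioo (0 : ℝ) τ,
      ∀ x ∈ Metric.closedBall (0 : EuclideanSpace ℝ (Fin n)) d, ‖g t x‖ ≤ K)
    (H : Matrix (Fin m) (Fin n) ℝ) (y : Fin m → ℝ) (σy : ℝ) (hσy : 0 < σy)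
    (py : ℝ)
    (hpy : py = ∫ x₀, gpdf m σy (∑ i, (y i - H.mulVec (fun k => x₀ k) i) ^ 2) * p0 x₀)
    (hpy_pos : 0 < py) :
    ∀ x ∈ Metric.closedBall (0 : EuclideanSpace ℝ (Fin n)) d,
      Tendsto
        (fun t =>
          (-Real.log (p t x) - σ t ^ 2 / 2 * ‖g t x‖ ^ 2
              + (∑ i, (y i - H.mulVec (fun k => (x + σ t ^ 2 • g t x) k) i) ^ 2)
                  / (2 * σy ^ 2)
              + Real.log py - n * Real.log (σ t)
              + (m * Real.log σy - ((n : ℝ) - m) / 2 * Real.log (2 * Real.pi)))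
            + n * Real.log (σ t))
        (nhdsWithin 0 (Set.Ioo 0 τ))
        (nhds
          (-(Real.log (p0 x)
              + Real.log (gpdf m σy (∑ i, (y i - H.mulVec (fun k => x k) i) ^ 2))
              - Real.log py)
            - (n : ℝ) / 2 * Real.log (2 * Real.pi))) :=
  simplified_vml_pointwise_limit_general n m τ d p0 σ hσ0 p g hlim hbdd H y σy hσy py
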